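/- arXiv:2007.15192 — 2 statements merged into one kernel-verified Lean document; each statement's English description precedes it below -/
import Mathlib

section
/- Let A ∈ ℝ^{m×n}, c ∈ ℝ^n, λ ∈ ℝ^m, and let x(λ) ∈ {0,1,⋆}^n be the induced partial solution (x(λ)_j = 1, 0, or ⋆ according to sign(c_j − ⟨λ,A^j⟩)). Let x ∈ {0,1}^n and let x* ∈ [0,1]^n satisfy Ax* = Ax, and suppose x* is compatible with x(λ) (agrees with x(λ) on all coordinates where x(λ)_j ≠ ⋆). Then ⟨c, x* − x⟩ = Σ_{j : x(λ)_j ≠ ⋆} |c_j − ⟨λ, A^j⟩| · 1[x_j ≠ x(λ)_j]. -/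
/-!
Since `A x* = A x`, the vector `x* - x` is orthogonal to every row combination `λᵀ A`, so
`⟨c, x* - x⟩ = ⟨r, x* - x⟩` for the reduced costs `r = c - λᵀ A`. Coordinatewise, compatibility
pins `x*_j` to `x(λ)_j` whenever `r_j ≠ 0`, so `r_j (x*_j - x_j)` is `|r_j|` if the binary `x_j`
disagrees with `x(λ)_j` and `0` otherwise.
-/

open Finset

open Matrix in
theorem dotProduct_sub_eq_of_mulVec_eq {ι κ R : Type*} [Fintype ι] [Fintype κ] [CommRing R]
    (A : Matrix κ ι R) (c : ι → R) (lam : κ → R) {y z : ι → R} (h : A *ᵥ y = A *ᵥ z) :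
    c ⬝ᵥ (y - z) = (c - lam ᵥ* A) ⬝ᵥ (y - z) := by
  have horth : (lam ᵥ* A) ⬝ᵥ (y - z) = 0 := by
    rw [← dotProduct_mulVec, mulVec_sub, h, sub_self, dotProduct_zero]
  rw [sub_dotProduct, horth, sub_zero]

theorem mul_sub_eq_abs_mul_ite {r x xstar : ℝ} (hx : x = 0 ∨ x = 1)
    (hpos : 0 < r → xstar = 1) (hneg : r < 0 → xstar = 0) :
    r * (xstar - x) = |r| * (if x = (if 0 < r then 1 else 0) then 0 else 1) := by
  rcases lt_trichotomy r 0 with hr | rfl | hr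
  · rcases hx with rfl | rfl <;>
      simp [hneg hr, abs_of_neg hr, not_lt.mpr hr.le]
  · simp
  · rcases hx with rfl | rfl <;>
      simp [hpos hr, abs_of_pos hr, hr]

theorem stmt_8_general {m n : ℕ} (A : Matrix (Fin m) (Fin n) ℝ) (c : Fin n → ℝ)
    (lam : Fin m → ℝ) (r : Fin n → ℝ) (hr : r = fun j => c j - ∑ i, lam i * A i j)
    (x xstar : Fin n → ℝ)
    (hx01 : ∀ j, x j = 0 ∨ x j = 1)
    (heq : A.mulVec xstar = A.mulVec x)
    -- compatibility of x* with x(λ): agreement wherever x(λ)_j ≠ ⋆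
    (hcompat : ∀ j, (0 < r j → xstar j = 1) ∧ (r j < 0 → xstar j = 0)) :
    ∑ j, c j * (xstar j - x j)
      = ∑ j ∈ Finset.univ.filter (fun j => r j ≠ 0),
          |r j| * (if x j = (if 0 < r j then 1 else 0) then 0 else 1) := by
  have hr' : r = c - Matrix.vecMul lam A := by
    rw [hr]; rfl
  calc ∑ j, c j * (xstar j - x j)
      = ∑ j, r j * (xstar j - x j) := by
        rw [hr']; exact dotProduct_sub_eq_of_mulVec_eq A c lam heq
    _ = ∑ j, |r j| * (if x j = (if 0 < r j then 1 else 0) then 0 else 1) :=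
        sum_congr rfl fun j _ => mul_sub_eq_abs_mul_ite (hx01 j) (hcompat j).1 (hcompat j).2
    _ = _ := (sum_filter_of_ne fun j _ hj => by
        rintro h0; simp [h0] at hj).symm

/-- the pareto-gap identity. If `x ∈ {0,1}^n`, `x* ∈ [0,1]^n` with
`Ax* = Ax`, and `x*` is compatible with the dual-based partial solution `x(λ)`,
then `⟨c, x* − x⟩ = Σ_{j : x(λ)_j ≠ ⋆} |c_j − ⟨λ,A^j⟩| · 1[x_j ≠ x(λ)_j]`. -/
theorem stmt_8 {m n : ℕ} (A : Matrix (Fin m) (Fin n) ℝ) (c : Fin n → ℝ)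
    (lam : Fin m → ℝ) (r : Fin n → ℝ) (hr : r = fun j => c j - ∑ i, lam i * A i j)
    (x xstar : Fin n → ℝ)
    (hx01 : ∀ j, x j = 0 ∨ x j = 1)
    (hxstar : ∀ j, xstar j ∈ Set.Icc (0:ℝ) 1)
    (heq : A.mulVec xstar = A.mulVec x)
    -- compatibility of x* with x(λ): agreement wherever x(λ)_j ≠ ⋆
    (hcompat : ∀ j, (0 < r j → xstar j = 1) ∧ (r j < 0 → xstar j = 0)) :
    ∑ j, c j * (xstar j - x j)
      = ∑ j ∈ Finset.univ.filter (fun j => r j ≠ 0),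
          |r j| * (if x j = (if 0 < r j then 1 else 0) then 0 else 1) :=
  stmt_8_general A c lam r hr x xstar hx01 heq hcompat
end

section
/- Consider branch-and-bound with variable branching and best-bound node selection applied to max{⟨c,x⟩ : Ax ≤ b, x ∈ {0,1}^n} with A having m rows. Let IPGap(b) = OPT(LP relaxation) − OPT(IP), let pareto(x) = LP_=(Ax) − ⟨c,x⟩ for x ∈ {0,1}^n (where LP_=(b') = max{⟨c,x⟩ : Ax = b', x ∈ [0,1]^n}), and let G = {x ∈ {0,1}^n : pareto(x) ≤ IPGap(b)}. Then the final branch-and-bound tree has at most 2·|G|·Σ_{i=0}^{m} C(n,i) + 1 nodes. -/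
/-!
At a branched node with LP optimum `x`, write `x` as a convex combination of its 0/1 roundings
on the set `I` of its (at most `m`) fractional coordinates. Averaging near-optimal solutions of
`LP_=(Ax')` over the roundings `x'` gives a point feasible for `LP_=(Ax)`, so some rounding `x'`
has `pareto(x') ≤ pareto(x) ≤ OPT(LP) − ⟨c,x⟩ ≤ IPGap(b)`, the last step by best-bound selection;
that is, `x' ∈ G`. The label `(x', I)` avoids the fixed coordinates and agrees with their
values. The labels compatible with the two children of a node are disjoint (they disagree at the
branching variable `j`) and exclude the node's own label (since `j ∈ I`), so there are at most
`|G| · Σ_{i ≤ m} C(n,i)` branched nodes, and a binary tree with `k` of them has `2k + 1` nodes.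
-/

open Finset

def dotc {n : ℕ} (c x : Fin n → ℝ) : ℝ := ∑ j, c j * x j

noncomputable def ipOpt {m n : ℕ} (A : Matrix (Fin m) (Fin n) ℝ) (b : Fin m → ℝ)
    (c : Fin n → ℝ) : ℝ :=
  sSup {v | ∃ x : Fin n → ℝ, (∀ j, x j = 0 ∨ x j = 1) ∧
    (∀ i, A.mulVec x i ≤ b i) ∧ v = dotc c x}

noncomputable def lpOpt {m n : ℕ} (A : Matrix (Fin m) (Fin n) ℝ) (b : Fin m → ℝ)
    (c : Fin n → ℝ) : ℝ :=
  sSup {v | ∃ x : Fin n → ℝ, (∀ j, x j ∈ Set.Icc (0:ℝ) 1) ∧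
    (∀ i, A.mulVec x i ≤ b i) ∧ v = dotc c x}

/-- `LP_=(b')`. -/
noncomputable def lpEq {m n : ℕ} (A : Matrix (Fin m) (Fin n) ℝ) (b' : Fin m → ℝ)
    (c : Fin n → ℝ) : ℝ :=
  sSup {v | ∃ x : Fin n → ℝ, (∀ j, x j ∈ Set.Icc (0:ℝ) 1) ∧
    A.mulVec x = b' ∧ v = dotc c x}

/-- `IPGap(b)`. -/
noncomputable def ipGap {m n : ℕ} (A : Matrix (Fin m) (Fin n) ℝ) (b : Fin m → ℝ)
    (c : Fin n → ℝ) : ℝ := lpOpt A b c - ipOpt A b c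

/-- `G`, with `pareto(x) = LP_=(Ax) − ⟨c,x⟩`. -/
noncomputable def goodSet {m n : ℕ} (A : Matrix (Fin m) (Fin n) ℝ) (b : Fin m → ℝ)
    (c : Fin n → ℝ) : Set (Fin n → ℝ) :=
  {x | (∀ j, x j = 0 ∨ x j = 1) ∧ lpEq A (A.mulVec x) c - dotc c x ≤ ipGap A b c}

/-- A branched node carries the optimal solution `xN` of its LP and the branching variable `j`;
its subtrees are `x_j = 0` and `x_j = 1`. Leaves are pruned nodes. -/
inductive BBTree (n : ℕ) : Type where
  | leaf : BBTree n
  | branch (xN : Fin n → ℝ) (j : Fin n) (l r : BBTree n) : BBTree n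

def BBTree.numNodes {n : ℕ} : BBTree n → ℕ
  | .leaf => 1
  | .branch _ _ l r => l.numNodes + r.numNodes + 1

/-- Validity of a branch-and-bound tree with variable branching and best-bound node
selection, relative to the current fixings `J0` (variables fixed to 0) and `J1`
(variables fixed to 1). At each branched node: `xN` is an optimal solution of the
node's LP with at most `m` fractional coordinates, its value is at least the IP
optimum (the best-bound property, Lemma 2.1 of the paper), and branching occurs on
a fractional coordinate `j` of `xN` not yet fixed. -/
def BBValid {m n : ℕ} (A : Matrix (Fin m) (Fin n) ℝ) (b : Fin m → ℝ) (c : Fin n → ℝ) :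
    Finset (Fin n) → Finset (Fin n) → BBTree n → Prop
  | _, _, .leaf => True
  | J0, J1, .branch xN j l r =>
      (∀ i, xN i ∈ Set.Icc (0:ℝ) 1) ∧
      (∀ i, A.mulVec xN i ≤ b i) ∧
      (∀ i ∈ J0, xN i = 0) ∧ (∀ i ∈ J1, xN i = 1) ∧
      (∀ y : Fin n → ℝ, (∀ i, y i ∈ Set.Icc (0:ℝ) 1) → (∀ i, A.mulVec y i ≤ b i) →
        (∀ i ∈ J0, y i = 0) → (∀ i ∈ J1, y i = 1) → dotc c y ≤ dotc c xN) ∧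
      (Finset.univ.filter (fun i => xN i ∈ Set.Ioo (0:ℝ) 1)).card ≤ m ∧
      ipOpt A b c ≤ dotc c xN ∧
      xN j ∈ Set.Ioo (0:ℝ) 1 ∧ j ∉ J0 ∧ j ∉ J1 ∧
      BBValid A b c (insert j J0) J1 l ∧ BBValid A b c J0 (insert j J1) r

noncomputable def pareto {m n : ℕ} (A : Matrix (Fin m) (Fin n) ℝ) (c x : Fin n → ℝ) : ℝ :=
  lpEq A (A.mulVec x) c - dotc c x

section LinearProgramming

variable {m n : ℕ} {A : Matrix (Fin m) (Fin n) ℝ} {b : Fin m → ℝ} {c : Fin n → ℝ}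

lemma dotc_le_sum_abs {x : Fin n → ℝ} (hx : ∀ j, x j ∈ Set.Icc (0 : ℝ) 1) :
    dotc c x ≤ ∑ j, |c j| :=
  sum_le_sum fun j _ => calc
    c j * x j ≤ |c j| * x j := mul_le_mul_of_nonneg_right (le_abs_self _) (hx j).1
    _ ≤ |c j| := mul_le_of_le_one_right (abs_nonneg _) (hx j).2

lemma le_lpOpt {x : Fin n → ℝ} (hx : ∀ j, x j ∈ Set.Icc (0 : ℝ) 1)
    (hAx : ∀ i, A.mulVec x i ≤ b i) : dotc c x ≤ lpOpt A b c :=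
  le_csSup ⟨∑ j, |c j|, by rintro _ ⟨_, hy, -, rfl⟩; exact dotc_le_sum_abs hy⟩ ⟨x, hx, hAx, rfl⟩

lemma le_lpEq {x : Fin n → ℝ} {b' : Fin m → ℝ} (hx : ∀ j, x j ∈ Set.Icc (0 : ℝ) 1)
    (hAx : A.mulVec x = b') : dotc c x ≤ lpEq A b' c :=
  le_csSup ⟨∑ j, |c j|, by rintro _ ⟨_, hy, -, rfl⟩; exact dotc_le_sum_abs hy⟩ ⟨x, hx, hAx, rfl⟩

lemma lpEq_mulVec_le_lpOpt {x : Fin n → ℝ} (hx : ∀ j, x j ∈ Set.Icc (0 : ℝ) 1)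
    (hAx : ∀ i, A.mulVec x i ≤ b i) : lpEq A (A.mulVec x) c ≤ lpOpt A b c :=
  csSup_le ⟨_, x, hx, rfl, rfl⟩ <| by
    rintro _ ⟨y, hy, hAy, rfl⟩
    exact le_lpOpt hy fun i => hAy ▸ hAx i

lemma exists_pareto_le_of_mem_convexHull {R : Set (Fin n → ℝ)}
    (hR : ∀ x ∈ R, ∀ j, x j ∈ Set.Icc (0 : ℝ) 1) {x₀ : Fin n → ℝ} (hx₀ : x₀ ∈ convexHull ℝ R) :
    ∃ x ∈ R, pareto A c x ≤ pareto A c x₀ := by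
  -- Otherwise, averaging near-optimal solutions `y i` of `LP_=(A (x i))` with the weights that
  -- represent `x₀` yields a point `z` with `A z = A x₀` and `⟨c,z⟩ > LP_=(A x₀)`.
  by_contra! hlt
  obtain ⟨ι, _, w, x, hw₀, hw₁, hxR, rfl⟩ := mem_convexHull_iff_exists_fintype.mp hx₀
  set p := pareto A c (∑ i, w i • x i)
  have hy : ∀ i, ∃ y : Fin n → ℝ, (∀ j, y j ∈ Set.Icc (0 : ℝ) 1) ∧
      A.mulVec y = A.mulVec (x i) ∧ p + dotc c (x i) < dotc c y := by
    intro i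
    have hp_lt : p + dotc c (x i) < lpEq A (A.mulVec (x i)) c := by
      have := hlt _ (hxR i); unfold pareto at this; linarith
    obtain ⟨_, ⟨y, hy, hAy, rfl⟩, hv⟩ :=
      exists_lt_of_lt_csSup (by exact ⟨_, x i, hR _ (hxR i), rfl, rfl⟩) hp_lt
    exact ⟨y, hy, hAy, hv⟩
  choose y hy hAy hcy using hy
  have hz : ∑ i, w i • y i ∈ Set.univ.pi fun _ => Set.Icc (0 : ℝ) 1 :=
    (convex_pi fun _ _ => convex_Icc 0 1).sum_mem (fun i _ => hw₀ i) hw₁ fun i _ j _ => hy i j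
  have hAz : A.mulVec (∑ i, w i • y i) = A.mulVec (∑ i, w i • x i) := by
    simp only [Matrix.mulVec_sum, Matrix.mulVec_smul, hAy]
  have hdotc : ∀ v : ι → Fin n → ℝ, dotc c (∑ i, w i • v i) = ∑ i, w i * dotc c (v i) :=
    fun v => by
      change dotProduct c _ = ∑ i, w i * dotProduct c (v i)
      simp only [dotProduct_sum, dotProduct_smul, smul_eq_mul]
  obtain ⟨i₀, -, hi₀⟩ := exists_ne_zero_of_sum_ne_zero (hw₁ ▸ one_ne_zero)
  have hmean : p + dotc c (∑ i, w i • x i) < dotc c (∑ i, w i • y i) := calc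
    p + dotc c (∑ i, w i • x i) = ∑ i, w i * (p + dotc c (x i)) := by
      simp only [hdotc, mul_add, sum_add_distrib, ← sum_mul, hw₁, one_mul]
    _ < ∑ i, w i * dotc c (y i) :=
      sum_lt_sum (fun i _ => mul_le_mul_of_nonneg_left (hcy i).le (hw₀ i))
        ⟨i₀, mem_univ _, mul_lt_mul_of_pos_left (hcy i₀) ((hw₀ i₀).lt_of_ne' hi₀)⟩
    _ = _ := (hdotc y).symm
  have := le_lpEq (c := c) (fun j => hz j trivial) hAz
  unfold p pareto at hmean; linarith

end LinearProgramming

def roundings {n : ℕ} (x : Fin n → ℝ) : Set (Fin n → ℝ) :=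
  Set.univ.pi fun j => {t | (t = 0 ∨ t = 1) ∧ (x j ∉ Set.Ioo (0 : ℝ) 1 → t = x j)}

lemma mem_convexHull_roundings {n : ℕ} {x : Fin n → ℝ} (hx : ∀ j, x j ∈ Set.Icc (0 : ℝ) 1) :
    x ∈ convexHull ℝ (roundings x) := by
  refine mem_convexHull_pi fun j _ => ?_
  by_cases hj : x j ∈ Set.Ioo (0 : ℝ) 1
  · refine convexHull_mono (s := {0, 1}) ?_ ?_
    · rintro t (rfl | rfl) <;> simp [hj]
    · rw [convexHull_pair, segment_eq_Icc zero_le_one]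
      exact hx j
  · have hj01 : x j ∈ ({0, 1} : Set ℝ) := Set.Icc_sdiff_Ioo_same (zero_le_one' ℝ) ▸ ⟨hx j, hj⟩
    exact subset_convexHull ℝ _ ⟨hj01, fun _ => rfl⟩

lemma exists_mem_goodSet_agree {m n : ℕ} {A : Matrix (Fin m) (Fin n) ℝ} {b : Fin m → ℝ}
    {c x : Fin n → ℝ} (hx : ∀ j, x j ∈ Set.Icc (0 : ℝ) 1) (hAx : ∀ i, A.mulVec x i ≤ b i)
    (hbound : ipOpt A b c ≤ dotc c x) :
    ∃ x' ∈ goodSet A b c, ∀ j, x j ∉ Set.Ioo (0 : ℝ) 1 → x' j = x j := by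
  obtain ⟨x', hx'R, hx'⟩ := exists_pareto_le_of_mem_convexHull (A := A) (c := c)
    (fun y hy j => by rcases (hy j trivial).1 with h | h <;> simp [h]) (mem_convexHull_roundings hx)
  refine ⟨x', ⟨fun j => (hx'R j trivial).1, ?_⟩, fun j => (hx'R j trivial).2⟩
  have := lpEq_mulVec_le_lpOpt (c := c) hx hAx
  unfold pareto at hx'
  unfold ipGap
  linarith

def Compatible {n : ℕ} (J₀ J₁ : Finset (Fin n)) (p : (Fin n → ℝ) × Finset (Fin n)) : Prop :=
  (∀ j ∈ J₀, j ∉ p.2 ∧ p.1 j = 0) ∧ (∀ j ∈ J₁, j ∉ p.2 ∧ p.1 j = 1)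

open Classical in
lemma card_compatible_insert_add_card_compatible_insert_lt {n : ℕ}
    (U : Finset ((Fin n → ℝ) × Finset (Fin n))) {J₀ J₁ : Finset (Fin n)} {j : Fin n}
    {p : (Fin n → ℝ) × Finset (Fin n)} (hpU : p ∈ U) (hp : Compatible J₀ J₁ p) (hj : j ∈ p.2) :
    #(U.filter (Compatible (insert j J₀) J₁)) + #(U.filter (Compatible J₀ (insert j J₁))) <
      #(U.filter (Compatible J₀ J₁)) := by
  have hdisj : Disjoint (U.filter (Compatible (insert j J₀) J₁))
      (U.filter (Compatible J₀ (insert j J₁))) :=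
    disjoint_filter.mpr fun q _ h₀ h₁ => by
      simpa [(h₀.1 j (mem_insert_self _ _)).2] using (h₁.2 j (mem_insert_self _ _)).2
  have hsub : U.filter (Compatible (insert j J₀) J₁) ∪ U.filter (Compatible J₀ (insert j J₁)) ⊂
      U.filter (Compatible J₀ J₁) := by
    refine Finset.ssubset_iff_of_subset ?_ |>.mpr ⟨p, mem_filter.mpr ⟨hpU, hp⟩, ?_⟩
    · refine union_subset (fun q hq => ?_) (fun q hq => ?_) <;> rw [mem_filter] at hq ⊢
      · exact ⟨hq.1, fun i hi => hq.2.1 i (mem_insert_of_mem hi), hq.2.2⟩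
      · exact ⟨hq.1, hq.2.1, fun i hi => hq.2.2 i (mem_insert_of_mem hi)⟩
    · simp only [mem_union, mem_filter, not_or, not_and]
      exact ⟨fun _ h => (h.1 j (mem_insert_self _ _)).1 hj,
        fun _ h => (h.2 j (mem_insert_self _ _)).1 hj⟩
  rw [← card_union_of_disjoint hdisj]
  exact card_lt_card hsub

lemma card_filter_card_le (n m : ℕ) :
    #(univ.filter fun I : Finset (Fin n) => #I ≤ m) = ∑ i ∈ range (m + 1), n.choose i := by
  rw [card_eq_sum_card_fiberwise (f := Finset.card) (t := range (m + 1))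
    (fun I hI => by simpa [Nat.lt_succ_iff] using hI)]
  refine sum_congr rfl fun i hi => ?_
  have hfiber : {I ∈ univ.filter fun I : Finset (Fin n) => #I ≤ m | #I = i} =
      powersetCard i univ := by
    ext I
    simp only [mem_filter, mem_univ, true_and, mem_powersetCard, subset_univ, and_iff_right_iff_imp]
    rintro rfl; simpa [Nat.lt_succ_iff] using hi
  rw [hfiber, card_powersetCard, card_univ, Fintype.card_fin]

lemma goodSet_finite {m n : ℕ} (A : Matrix (Fin m) (Fin n) ℝ) (b : Fin m → ℝ) (c : Fin n → ℝ) :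
    (goodSet A b c).Finite :=
  (Set.Finite.pi fun _ => (Set.finite_singleton (1 : ℝ)).insert 0).subset
    fun _ hx j _ => hx.1 j

open Classical in
lemma numNodes_le_of_bbValid {m n : ℕ} {A : Matrix (Fin m) (Fin n) ℝ} {b : Fin m → ℝ}
    {c : Fin n → ℝ} (U : Finset ((Fin n → ℝ) × Finset (Fin n)))
    (hU : ∀ x ∈ goodSet A b c, ∀ I : Finset (Fin n), #I ≤ m → (x, I) ∈ U)
    {T : BBTree n} {J₀ J₁ : Finset (Fin n)} (hT : BBValid A b c J₀ J₁ T) :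
    T.numNodes ≤ 2 * #(U.filter (Compatible J₀ J₁)) + 1 := by
  induction T generalizing J₀ J₁ with
  | leaf => simp [BBTree.numNodes]
  | branch x j l r ihl ihr =>
    obtain ⟨hx, hAx, hx₀, hx₁, -, hfrac, hbound, hj, -, -, hl, hr⟩ := hT
    obtain ⟨x', hx'G, hx'⟩ := exists_mem_goodSet_agree hx hAx hbound
    set I := univ.filter fun i => x i ∈ Set.Ioo (0 : ℝ) 1
    have hfixed : ∀ i, x i ∉ Set.Ioo (0 : ℝ) 1 → i ∉ I ∧ x' i = x i :=
      fun i h => ⟨by simpa [I] using h, hx' i h⟩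
    have hp : Compatible J₀ J₁ (x', I) :=
      ⟨fun i hi => by simpa [hx₀ i hi] using hfixed i (by simp [hx₀ i hi]),
        fun i hi => by simpa [hx₁ i hi] using hfixed i (by simp [hx₁ i hi])⟩
    have hlt := card_compatible_insert_add_card_compatible_insert_lt U (hU x' hx'G I hfrac) hp
      (mem_filter.mpr ⟨mem_univ j, hj⟩)
    have := ihl hl
    have := ihr hr
    simp only [BBTree.numNodes]
    omega

/-- the final branch-and-bound tree (rooted at the LP relaxation,
i.e. with no fixings) has at most `2·|G|·Σ_{i=0}^m C(n,i) + 1` nodes. -/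
theorem stmt_19 {m n : ℕ} (A : Matrix (Fin m) (Fin n) ℝ) (b : Fin m → ℝ)
    (c : Fin n → ℝ) (T : BBTree n) (hT : BBValid A b c ∅ ∅ T) :
    T.numNodes ≤ 2 * (goodSet A b c).ncard * (∑ i ∈ Finset.range (m + 1), n.choose i) + 1 := by
  classical
  have hG := goodSet_finite A b c
  set U := hG.toFinset ×ˢ univ.filter fun I : Finset (Fin n) => #I ≤ m
  calc T.numNodes ≤ 2 * #(U.filter (Compatible ∅ ∅)) + 1 :=
        numNodes_le_of_bbValid U (fun x hx I hI => by simp [U, hx, hI]) hT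
    _ ≤ 2 * #U + 1 := by gcongr; exact filter_subset _ U
    _ = _ := by
      rw [card_product, card_filter_card_le, ← Set.ncard_eq_toFinset_card _ hG, mul_assoc]
end
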